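/- arXiv:1801.05798 — 6 statements merged into one kernel-verified Lean document; each statement's English description precedes it below -/
import Mathlib

section
/- In a PET, the image of the assert map of a sharp effect p equals p: im(asrt_p) = p. -/
universe u v

/-- An effect algebra: a set with a partially defined commutative associative
addition (encoded via `Option`), a zero, a one, such that `x + 0 = x`,
`x + 1` defined implies `x = 0`, and every element has a unique complement. -/
structure EffectAlgebra (E : Type u) where
  add : E → E → Option E
  zero : E
  one : E
  add_comm' : ∀ x y, add x y = add y x
  add_assoc' : ∀ x y z xy xyz, add x y = some xy → add xy z = some xyz →
      ∃ yz, add y z = some yz ∧ add x yz = some xyz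
  add_zero' : ∀ x, add x zero = some x
  one_max : ∀ x y, add x one = some y → x = zero
  compl_exists : ∀ x, ∃ y, add x y = some one
  compl_unique : ∀ x y₁ y₂, add x y₁ = some one → add x y₂ = some one → y₁ = y₂

namespace EffectAlgebra

variable {E : Type u} (a : EffectAlgebra E)

/-- The natural order: `x ≤ y` iff there is `z` with `x + z = y`. -/
def le (x y : E) : Prop := ∃ z, a.add x z = some y

/-- The complement `x⊥`: the unique element with `x + x⊥ = 1`. -/
noncomputable def compl (x : E) : E := Classical.choose (a.compl_exists x)

theorem compl_spec (x : E) : a.add x (a.compl x) = some a.one :=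
  Classical.choose_spec (a.compl_exists x)

end EffectAlgebra

open CategoryTheory

/-- An effect theory: a category with a designated trivial system `I` such
that each `Eff(A) := Hom(A, I)` is an effect algebra and precomposition
preserves zero and partial sums. -/
structure EffectTheory (C : Type u) [Category.{v} C] where
  I : C
  ea : ∀ A : C, EffectAlgebra (A ⟶ I)
  comp_zero : ∀ {A B : C} (g : B ⟶ A), g ≫ (ea A).zero = (ea B).zero
  comp_add : ∀ {A B : C} (g : B ⟶ A) (p q s : A ⟶ I),
      (ea A).add p q = some s → (ea B).add (g ≫ p) (g ≫ q) = some (g ≫ s)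

namespace EffectTheory

variable {C : Type u} [Category.{v} C] (E : EffectTheory C)

/-- `q` is the image of `f`: the least effect with `q ∘ f = 1 ∘ f`. -/
def IsImage {A B : C} (f : A ⟶ B) (q : B ⟶ E.I) : Prop :=
  f ≫ q = f ≫ (E.ea B).one ∧
    ∀ r : B ⟶ E.I, f ≫ r = f ≫ (E.ea B).one → (E.ea B).le q r

/-- An effect is sharp when it is the image of some map. -/
def Sharp {A : C} (q : A ⟶ E.I) : Prop := ∃ (B : C) (f : B ⟶ A), E.IsImage f q

/-- `π` is a compression for the effect `q`: `1 ∘ π = q ∘ π`, and `π` is final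
with this property. -/
def IsCompression {B A : C} (π : B ⟶ A) (q : A ⟶ E.I) : Prop :=
  π ≫ (E.ea A).one = π ≫ q ∧
    ∀ {D : C} (f : D ⟶ A), f ≫ (E.ea A).one = f ≫ q → ∃! g : D ⟶ B, f = g ≫ π

/-- `ξ` is a filter for the effect `q`: `1 ∘ ξ ≤ q`, and `ξ` is initial with
this property. -/
def IsFilter {A B : C} (ξ : A ⟶ B) (q : A ⟶ E.I) : Prop :=
  (E.ea A).le (ξ ≫ (E.ea B).one) q ∧
    ∀ {D : C} (f : A ⟶ D), (E.ea A).le (f ≫ (E.ea D).one) q → ∃! g : B ⟶ D, f = ξ ≫ g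

/-- A map is pure when it is a filter followed by a compression. -/
def Pure {A B : C} (f : A ⟶ B) : Prop :=
  ∃ (D : C) (q : A ⟶ E.I) (r : B ⟶ E.I) (ξ : A ⟶ D) (π : D ⟶ B),
    E.IsFilter ξ q ∧ E.IsCompression π r ∧ f = ξ ≫ π

end EffectTheory

/-- A pure effect theory (PET): an effect theory in which every effect has a
filter and a compression, every map has an image, the negation of a sharp
effect is sharp, the pure maps form a dagger category, filters and
compressions of sharp effects are adjoint, and compressions of sharp effects
are isometries. -/
structure PET {C : Type u} [Category.{v} C] (E : EffectTheory C) where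
  compObj : ∀ {A : C}, (A ⟶ E.I) → C
  compr : ∀ {A : C} (q : A ⟶ E.I), compObj q ⟶ A
  compr_is : ∀ {A : C} (q : A ⟶ E.I), E.IsCompression (compr q) q
  filtObj : ∀ {A : C}, (A ⟶ E.I) → C
  filt : ∀ {A : C} (q : A ⟶ E.I), A ⟶ filtObj q
  filt_is : ∀ {A : C} (q : A ⟶ E.I), E.IsFilter (filt q) q
  im : ∀ {A B : C}, (A ⟶ B) → (B ⟶ E.I)
  im_is : ∀ {A B : C} (f : A ⟶ B), E.IsImage f (im f)
  dag : ∀ {A B : C}, (A ⟶ B) → (B ⟶ A)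
  pure_id : ∀ A : C, E.Pure (𝟙 A)
  pure_comp : ∀ {A B D : C} (f : A ⟶ B) (g : B ⟶ D), E.Pure f → E.Pure g → E.Pure (f ≫ g)
  pure_dag : ∀ {A B : C} (f : A ⟶ B), E.Pure f → E.Pure (dag f)
  dag_dag : ∀ {A B : C} (f : A ⟶ B), E.Pure f → dag (dag f) = f
  dag_id : ∀ A : C, dag (𝟙 A) = 𝟙 A
  dag_comp : ∀ {A B D : C} (f : A ⟶ B) (g : B ⟶ D), E.Pure f → E.Pure g →
      dag (f ≫ g) = dag g ≫ dag f
  sharp_compl : ∀ {A : C} (q : A ⟶ E.I), E.Sharp q → E.Sharp ((E.ea A).compl q)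
  dag_compr_filt : ∀ {A B : C} (π : B ⟶ A) (q : A ⟶ E.I), E.Sharp q →
      E.IsCompression π q → E.IsFilter (dag π) q
  dag_filt_compr : ∀ {A B : C} (ξ : A ⟶ B) (q : A ⟶ E.I), E.Sharp q →
      E.IsFilter ξ q → E.IsCompression (dag ξ) q
  compr_isometry : ∀ {A B : C} (π : B ⟶ A) (q : A ⟶ E.I), E.Sharp q →
      E.IsCompression π q → π ≫ dag π = 𝟙 B

namespace PET

variable {C : Type u} [Category.{v} C] {E : EffectTheory C} (P : PET E)

/-- The assert map of an effect `p`: `asrt_p := π_p ∘ π_p†`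
(in diagrammatic order, `π_p†` followed by `π_p`). -/
def asrt {A : C} (p : A ⟶ E.I) : A ⟶ A := P.dag (P.compr p) ≫ P.compr p

end PET

/-! Since `π_p` is an isometry, `π_p†` is a split epimorphism, and precomposing with an
epimorphism does not change images; so `im(asrt_p) = im(π_p)`, and a sharp effect is the image
of its own compression. -/

namespace EffectAlgebra

variable {E : Type u} (a : EffectAlgebra E)

theorem add_left_cancel {x b c z : E} (hb : a.add x b = some z) (hc : a.add x c = some z) :
    b = c := by
  obtain ⟨w, hw⟩ := a.compl_exists z
  rw [a.add_comm'] at hb hc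
  obtain ⟨u, hbu, hxu⟩ := a.add_assoc' b x w z a.one hb hw
  obtain ⟨u', hcu, hxu'⟩ := a.add_assoc' c x w z a.one hc hw
  obtain rfl : u = u' := Option.some.inj (hbu.symm.trans hcu)
  rw [a.add_comm'] at hxu hxu'
  exact a.compl_unique u b c hxu hxu'

theorem eq_zero_of_add_eq_zero {b c : E} (h : a.add b c = some a.zero) : b = a.zero := by
  have hzero_one : a.add a.zero a.one = some a.one := by
    rw [a.add_comm']
    exact a.add_zero' a.one
  obtain ⟨w, hcw, -⟩ := a.add_assoc' b c a.one a.zero a.one h hzero_one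
  obtain rfl : c = a.zero := a.one_max c w hcw
  exact Option.some.inj ((a.add_zero' b).symm.trans h)

theorem le_antisymm {x y : E} (hxy : a.le x y) (hyx : a.le y x) : x = y := by
  obtain ⟨c, hc⟩ := hxy
  obtain ⟨d, hd⟩ := hyx
  obtain ⟨w, hcd, hxw⟩ := a.add_assoc' x c d y x hc hd
  obtain rfl : w = a.zero := a.add_left_cancel hxw (a.add_zero' x)
  obtain rfl : c = a.zero := a.eq_zero_of_add_eq_zero hcd
  exact Option.some.inj ((a.add_zero' x).symm.trans hc)

end EffectAlgebra

namespace EffectTheory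

variable {C : Type u} [Category.{v} C] {E : EffectTheory C}

theorem IsImage.unique {A B : C} {f : A ⟶ B} {q q' : B ⟶ E.I} (hq : E.IsImage f q)
    (hq' : E.IsImage f q') : q = q' :=
  (E.ea B).le_antisymm (hq.2 q' hq'.1) (hq'.2 q hq.1)

theorem IsImage.epi_comp {A B D : C} {f : B ⟶ D} {q : D ⟶ E.I} (hf : E.IsImage f q)
    (h : A ⟶ B) [Epi h] : E.IsImage (h ≫ f) q := by
  refine ⟨by rw [Category.assoc, hf.1, Category.assoc], fun r hr => hf.2 r ?_⟩
  simp only [Category.assoc] at hr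
  exact (cancel_epi h).1 hr

-- Every map witnessing the sharpness of `q` factors through its compression.
theorem IsCompression.isImage {B A : C} {π : B ⟶ A} {q : A ⟶ E.I}
    (hπ : E.IsCompression π q) (hq : E.Sharp q) : E.IsImage π q := by
  refine ⟨hπ.1.symm, fun r hr => ?_⟩
  obtain ⟨D, f, hf⟩ := hq
  obtain ⟨g, rfl, -⟩ := hπ.2 f hf.1.symm
  exact hf.2 r (by rw [Category.assoc, hr, Category.assoc])

end EffectTheory

/-- In a PET, the image of the assert map of a sharp effect `p`
equals `p`. -/
theorem pet_im_asrt {C : Type u} [Category.{v} C] {E : EffectTheory C} (P : PET E)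
    {A : C} (p : A ⟶ E.I) (hp : E.Sharp p) :
    P.im (P.asrt p) = p := by
  have : IsSplitEpi (P.dag (P.compr p)) :=
    IsSplitEpi.mk' ⟨P.compr p, P.compr_isometry _ p hp (P.compr_is p)⟩
  exact (P.im_is _).unique (((P.compr_is p).isImage hp).epi_comp _)
end

section
/- In a PET, for a sharp effect p and any map f whose domain is the codomain of asrt_p, one has 1 ∘ f ≤ p if and only if f ∘ asrt_p = f. -/
universe u v

open CategoryTheory

/-- In a PET, for a sharp effect `p` and any map `f` whose domain
is the codomain of `asrt_p`: `1 ∘ f ≤ p ↔ f ∘ asrt_p = f`. -/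
theorem pet_one_le_iff_fix_asrt {C : Type u} [Category.{v} C] {E : EffectTheory C}
    (P : PET E) {A : C} (p : A ⟶ E.I) (hp : E.Sharp p) {B : C} (f : A ⟶ B) :
    (E.ea A).le (f ≫ (E.ea B).one) p ↔ P.asrt p ≫ f = f := by
  have le_trans' : ∀ (x y z : A ⟶ E.I), (E.ea A).le x y → (E.ea A).le y z →
      (E.ea A).le x z := by
    rintro x y z ⟨u, hu⟩ ⟨v, hv⟩
    obtain ⟨w, _, hw2⟩ := (E.ea A).add_assoc' x u v y z hu hv
    exact ⟨w, hw2⟩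
  set π := P.compr p with hπ
  set δ := P.dag π with hδ
  have hfilt := P.dag_compr_filt π p hp (P.compr_is p)
  have hiso : π ≫ δ = 𝟙 _ := P.compr_isometry π p hp (P.compr_is p)
  constructor
  · intro h
    obtain ⟨g, hg, -⟩ := hfilt.2 f h
    rw [PET.asrt, hg]
    show (δ ≫ π) ≫ δ ≫ g = δ ≫ g
    rw [Category.assoc, show π ≫ δ ≫ g = (π ≫ δ) ≫ g by simp, hiso]
    simp
  · intro h
    have h1 : f ≫ (E.ea B).one = δ ≫ (π ≫ f ≫ (E.ea B).one) := by
      conv_lhs => rw [← h]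
      simp [PET.asrt]
      rfl
    rw [h1]
    -- π ≫ f ≫ 1 ≤ 1 on compObj p
    set q : P.compObj p ⟶ E.I := π ≫ f ≫ (E.ea B).one with hq
    have hq1 : (E.ea (P.compObj p)).le q (E.ea (P.compObj p)).one :=
      ⟨_, (E.ea (P.compObj p)).compl_spec q⟩
    obtain ⟨r, hr⟩ := hq1
    have := E.comp_add δ q r _ hr
    exact le_trans' _ _ _ ⟨δ ≫ r, this⟩ hfilt.1
end

section
/- In a PET, two sharp effects p, q on the same system are orthogonal (i.e., p + q is defined) if and only if q ∘ asrt_p = 0. -/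
universe u v

open CategoryTheory

/-! Let `π` be the compression of `p`. Since `π` is an isometry whose dagger is a filter for `p`,
`π ≫ p = π ≫ 1 = 1`, and `asrt_p ≫ q = 0` iff `π ≫ q = 0`. If `p + q` is defined, so is
`1 + π ≫ q`, which forces `π ≫ q = 0`. Conversely, `π ≫ q = 0` gives `π ≫ q⊥ = π ≫ 1`; as `p` is
the image of a map that factors through `π`, minimality of images yields `p ≤ q⊥`, hence `p ⊥ q`. -/

namespace EffectAlgebra

variable {E : Type u} (a : EffectAlgebra E)

theorem zero_add' (x : E) : a.add a.zero x = some x := by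
  rw [a.add_comm']
  exact a.add_zero' x

theorem eq_of_zero_add {x y : E} (h : a.add a.zero x = some y) : x = y :=
  Option.some_injective _ ((a.zero_add' x).symm.trans h)

theorem eq_zero_of_one_add {x y : E} (h : a.add a.one x = some y) : x = a.zero :=
  a.one_max x y (by rw [a.add_comm']; exact h)

theorem isSome_add_of_le_compl {p q : E} (h : a.le p (a.compl q)) : (a.add p q).isSome := by
  obtain ⟨z, hz⟩ := h
  -- `(z + p) + q = q⊥ + q = 1`, so associativity makes `p + q` defined.
  have hz' : a.add z p = some (a.compl q) := by rw [a.add_comm']; exact hz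
  have hq : a.add (a.compl q) q = some a.one := by rw [a.add_comm']; exact a.compl_spec q
  obtain ⟨pq, hpq, -⟩ := a.add_assoc' z p q _ _ hz' hq
  exact Option.isSome_iff_exists.mpr ⟨pq, hpq⟩

end EffectAlgebra

namespace EffectTheory

variable {C : Type u} [Category.{v} C] (E : EffectTheory C)

theorem comp_eq_zero_of_comp_eq_one {A B : C} (g : B ⟶ A) {p q s : A ⟶ E.I}
    (hs : (E.ea A).add p q = some s) (hp : g ≫ p = (E.ea B).one) :
    g ≫ q = (E.ea B).zero := by
  have h := E.comp_add g p q s hs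
  rw [hp] at h
  exact (E.ea B).eq_zero_of_one_add h

theorem comp_compl_of_comp_eq_zero {A B : C} (g : B ⟶ A) {q : A ⟶ E.I}
    (hq : g ≫ q = (E.ea B).zero) : g ≫ (E.ea A).compl q = g ≫ (E.ea A).one := by
  have h := E.comp_add g q _ _ ((E.ea A).compl_spec q)
  rw [hq] at h
  exact (E.ea B).eq_of_zero_add h

theorem le_of_compression_comp_eq_one {A B : C} {p r : A ⟶ E.I} {π : B ⟶ A}
    (hp : E.Sharp p) (hπ : E.IsCompression π p) (hr : π ≫ r = π ≫ (E.ea A).one) :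
    (E.ea A).le p r := by
  obtain ⟨D, f, hf_one, hf_least⟩ := hp
  obtain ⟨g, rfl, -⟩ := hπ.2 f hf_one.symm
  exact hf_least r (by rw [Category.assoc, Category.assoc, hr])

end EffectTheory

namespace PET

variable {C : Type u} [Category.{v} C] {E : EffectTheory C} (P : PET E)

theorem compr_comp_dag {A : C} {p : A ⟶ E.I} (hp : E.Sharp p) :
    P.compr p ≫ P.dag (P.compr p) = 𝟙 _ :=
  P.compr_isometry _ p hp (P.compr_is p)

theorem compr_comp_one {A : C} {p : A ⟶ E.I} (hp : E.Sharp p) :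
    P.compr p ≫ (E.ea A).one = (E.ea (P.compObj p)).one := by
  -- `π† ≫ 1 + z = p` since `π†` is a filter for `p`; precompose with `π` and use `π ≫ π† = 𝟙`.
  obtain ⟨z, hz⟩ := (P.dag_compr_filt _ p hp (P.compr_is p)).1
  have h := E.comp_add (P.compr p) _ _ _ hz
  rw [← Category.assoc, P.compr_comp_dag hp, Category.id_comp, ← (P.compr_is p).1] at h
  rw [(E.ea _).eq_zero_of_one_add h, (E.ea _).add_zero'] at h
  exact (Option.some_injective _ h).symm

theorem asrt_comp_eq_zero_iff {A : C} {p : A ⟶ E.I} (hp : E.Sharp p) (q : A ⟶ E.I) :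
    P.asrt p ≫ q = (E.ea A).zero ↔ P.compr p ≫ q = (E.ea (P.compObj p)).zero := by
  constructor
  · intro h
    calc P.compr p ≫ q = P.compr p ≫ P.asrt p ≫ q := by
          rw [asrt, Category.assoc, ← Category.assoc (P.compr p), P.compr_comp_dag hp,
            Category.id_comp]
      _ = (E.ea (P.compObj p)).zero := by rw [h, E.comp_zero]
  · intro h
    rw [asrt, Category.assoc, h, E.comp_zero]

end PET

theorem pet_orthogonal_iff_asrt_zero_general {C : Type u} [Category.{v} C] {E : EffectTheory C}
    (P : PET E) {A : C} (p q : A ⟶ E.I) (hp : E.Sharp p) :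
    ((E.ea A).add p q).isSome ↔ P.asrt p ≫ q = (E.ea A).zero := by
  rw [P.asrt_comp_eq_zero_iff hp]
  constructor
  · intro h
    obtain ⟨s, hs⟩ := Option.isSome_iff_exists.mp h
    have hπp : P.compr p ≫ p = (E.ea _).one := by
      rw [← (P.compr_is p).1, P.compr_comp_one hp]
    exact E.comp_eq_zero_of_comp_eq_one _ hs hπp
  · intro h
    exact (E.ea A).isSome_add_of_le_compl <| E.le_of_compression_comp_eq_one hp (P.compr_is p)
      (E.comp_compl_of_comp_eq_zero _ h)

/-- In a PET, sharp effects `p, q` on the same system are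
orthogonal (`p + q` is defined) iff `q ∘ asrt_p = 0`. -/
theorem pet_orthogonal_iff_asrt_zero {C : Type u} [Category.{v} C] {E : EffectTheory C}
    (P : PET E) {A : C} (p q : A ⟶ E.I) (hp : E.Sharp p) (hq : E.Sharp q) :
    ((E.ea A).add p q).isSome ↔ P.asrt p ≫ q = (E.ea A).zero :=
  pet_orthogonal_iff_asrt_zero_general P p q hp
end

section
/- Any finite set of pairwise orthogonal non-zero sharp effects in a system of an operational PET is linearly independent in the associated order unit space. -/
/-! Applying the assert map of `p j` to a vanishing combination `∑ cᵢ • pᵢ = 0` kills every term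
except `c j • p j`, which it fixes; since `p j ≠ 0`, this forces `c j = 0`. -/

theorem LinearIndependent.of_pairwise_map_eq_zero_of_map_self {ι R M : Type*} [Ring R]
    [IsCancelMulZero R] [AddCommGroup M] [Module R M] [Module.IsTorsionFree R M]
    (v : ι → M) (f : ι → M →ₗ[R] M)
    (hzero : Pairwise fun i j ↦ f i (v j) = 0) (hself : ∀ i, f i (v i) = v i)
    (hne : ∀ i, v i ≠ 0) :
    LinearIndependent R v := by
  refine linearIndependent_iff'.mpr fun s g hrel i _ ↦ ?_
  have hoff (j : ι) (_ : j ∈ s) (hji : j ≠ i) : f i (g j • v j) = 0 := by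
    rw [map_smul, hzero hji.symm, smul_zero]
  have hgi : g i • v i = 0 := by
    have := congr_arg (f i) hrel
    rwa [map_sum, s.sum_eq_single i hoff (by lia), map_smul, hself i, map_zero] at this
  exact (smul_eq_zero_iff_left (hne i)).mp hgi

theorem opet_orthogonal_sharp_linearIndependent_general
    {V : Type} [AddCommGroup V] [PartialOrder V] [Module ℝ V]
    (one : V) (Sharp : V → Prop)
    (asrt : V → (V →ₗ[ℝ] V))
    (hfix : ∀ p, Sharp p → asrt p p = p)
    (horth : ∀ p q, Sharp p → Sharp q → p + q ≤ one → asrt p q = 0)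
    (n : ℕ) (p : Fin n → V)
    (hsharp : ∀ i, Sharp (p i)) (hnz : ∀ i, p i ≠ 0)
    (hpair : ∀ i j, i ≠ j → p i + p j ≤ one) :
    LinearIndependent ℝ p :=
  .of_pairwise_map_eq_zero_of_map_self p (fun i ↦ asrt (p i))
    (fun i j hij ↦ horth _ _ (hsharp i) (hsharp j) (hpair i j hij))
    (fun i ↦ hfix _ (hsharp i)) hnz

/-- In a system of an operational PET (whose effect space is the
unit interval of a finite-dimensional order unit space `V`), any finite set of
pairwise orthogonal non-zero sharp effects is linearly independent.
Context facts: the assert map `asrt_p` of a sharp effect `p` acts linearly on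
effects with `p ∘ asrt_p = p`, and `q ∘ asrt_p = 0` for sharp `q` orthogonal
to `p` (orthogonality of sharp effects meaning `p + q ≤ 1`). -/
theorem opet_orthogonal_sharp_linearIndependent
    {V : Type} [AddCommGroup V] [PartialOrder V] [Module ℝ V] [FiniteDimensional ℝ V]
    (one : V) (Sharp : V → Prop)
    (asrt : V → (V →ₗ[ℝ] V))
    (hfix : ∀ p, Sharp p → asrt p p = p)
    (horth : ∀ p q, Sharp p → Sharp q → p + q ≤ one → asrt p q = 0)
    (n : ℕ) (p : Fin n → V)
    (hsharp : ∀ i, Sharp (p i)) (hnz : ∀ i, p i ≠ 0)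
    (hpair : ∀ i j, i ≠ j → p i + p j ≤ one) :
    LinearIndependent ℝ p :=
  opet_orthogonal_sharp_linearIndependent_general one Sharp asrt hfix horth n p hsharp hnz hpair
end

section
/- In a PET whose scalars are the real unit interval, every scalar is self-adjoint: s† = s for all scalars s : I → I. -/
universe u v

open CategoryTheory

/-! If `φ u ≤ φ v` then `u = r ≫ v` for the scalar `r` with `φ r = φ u / φ v`, so
`u† = v† ≫ r†` and `φ u† ≤ φ v†`: the dagger is monotone on scalars. A monotone
involution of a linear order is the identity. -/

theorem Function.Involutive.apply_eq_self_of_le_imp {α β : Type*} [LinearOrder β] {f : α → α}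
    (hf : Function.Involutive f) {g : α → β} (hg : Function.Injective g)
    (hmono : ∀ a b, g a ≤ g b → g (f a) ≤ g (f b)) (a : α) : f a = a := by
  apply hg
  rcases le_total (g (f a)) (g a) with h | h
  · refine h.antisymm ?_
    simpa only [hf a] using hmono _ _ h
  · refine le_antisymm ?_ h
    simpa only [hf a] using hmono _ _ h

section Scalars

variable {C : Type u} [Category.{v} C] {X : C} (φ : (X ⟶ X) → ℝ)

theorem exists_comp_eq_of_le (hinj : Function.Injective φ)
    (hmem : ∀ s : X ⟶ X, φ s ∈ Set.Icc (0 : ℝ) 1)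
    (hsurj : ∀ r ∈ Set.Icc (0 : ℝ) 1, ∃ s : X ⟶ X, φ s = r)
    (hmul : ∀ s t : X ⟶ X, φ (s ≫ t) = φ s * φ t)
    {u v : X ⟶ X} (huv : φ u ≤ φ v) : ∃ r : X ⟶ X, u = r ≫ v := by
  suffices ∃ r : X ⟶ X, φ r * φ v = φ u by
    obtain ⟨r, hr⟩ := this
    exact ⟨r, hinj (by rw [hmul, hr])⟩
  rcases (hmem v).1.eq_or_lt with hv | hv
  · -- then `φ u = 0` too, and any `r` will do
    refine ⟨u, ?_⟩
    rw [← hv, mul_zero]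
    exact le_antisymm (hmem u).1 (hv ▸ huv)
  · obtain ⟨r, hr⟩ := hsurj (φ u / φ v) ⟨div_nonneg (hmem u).1 hv.le, (div_le_one hv).2 huv⟩
    exact ⟨r, by rw [hr, div_mul_cancel₀ _ hv.ne']⟩

theorem apply_comp_le (hmem : ∀ s : X ⟶ X, φ s ∈ Set.Icc (0 : ℝ) 1)
    (hmul : ∀ s t : X ⟶ X, φ (s ≫ t) = φ s * φ t) (v r : X ⟶ X) : φ (v ≫ r) ≤ φ v := by
  rw [hmul]
  exact mul_le_of_le_one_right (hmem v).1 (hmem r).2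

end Scalars

namespace PET

variable {C : Type u} [Category.{v} C] {E : EffectTheory C} (P : PET E)

theorem involutive_dag_of_pure {A : C} (hpure : ∀ f : A ⟶ A, E.Pure f) :
    Function.Involutive (P.dag : (A ⟶ A) → (A ⟶ A)) :=
  fun f => P.dag_dag f (hpure f)

theorem dag_le_dag_of_le {A : C} (φ : (A ⟶ A) → ℝ) (hinj : Function.Injective φ)
    (hmem : ∀ s : A ⟶ A, φ s ∈ Set.Icc (0 : ℝ) 1)
    (hsurj : ∀ r ∈ Set.Icc (0 : ℝ) 1, ∃ s : A ⟶ A, φ s = r)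
    (hmul : ∀ s t : A ⟶ A, φ (s ≫ t) = φ s * φ t) (hpure : ∀ f : A ⟶ A, E.Pure f)
    {u v : A ⟶ A} (huv : φ u ≤ φ v) : φ (P.dag u) ≤ φ (P.dag v) := by
  obtain ⟨r, rfl⟩ := exists_comp_eq_of_le φ hinj hmem hsurj hmul huv
  rw [P.dag_comp r v (hpure r) (hpure v)]
  exact apply_comp_le φ hmem hmul _ _

end PET

theorem pet_scalar_self_adjoint_general {C : Type u} [Category.{v} C] {E : EffectTheory C}
    (P : PET E) (φ : (E.I ⟶ E.I) → ℝ)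
    (hinj : Function.Injective φ)
    (hmem : ∀ s : E.I ⟶ E.I, φ s ∈ Set.Icc (0 : ℝ) 1)
    (hsurj : ∀ r ∈ Set.Icc (0 : ℝ) 1, ∃ s : E.I ⟶ E.I, φ s = r)
    (hmul : ∀ s t : E.I ⟶ E.I, φ (s ≫ t) = φ s * φ t)
    (hpure : ∀ s : E.I ⟶ E.I, E.Pure s) :
    ∀ s : E.I ⟶ E.I, P.dag s = s :=
  (P.involutive_dag_of_pure hpure).apply_eq_self_of_le_imp hinj
    fun _ _ => P.dag_le_dag_of_le φ hinj hmem hsurj hmul hpure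

/-- In a PET whose scalars are the real unit interval (with
composition corresponding to multiplication and the effect-algebra order to
the usual order, and with every scalar pure), every scalar is self-adjoint:
`s† = s`. -/
theorem pet_scalar_self_adjoint {C : Type u} [Category.{v} C] {E : EffectTheory C}
    (P : PET E) (φ : (E.I ⟶ E.I) → ℝ)
    (hinj : Function.Injective φ)
    (hmem : ∀ s : E.I ⟶ E.I, φ s ∈ Set.Icc (0 : ℝ) 1)
    (hsurj : ∀ r ∈ Set.Icc (0 : ℝ) 1, ∃ s : E.I ⟶ E.I, φ s = r)
    (hmul : ∀ s t : E.I ⟶ E.I, φ (s ≫ t) = φ s * φ t)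
    (horder : ∀ s t : E.I ⟶ E.I, (E.ea E.I).le s t ↔ φ s ≤ φ t)
    (hpure : ∀ s : E.I ⟶ E.I, E.Pure s) :
    ∀ s : E.I ⟶ E.I, P.dag s = s :=
  pet_scalar_self_adjoint_general P φ hinj hmem hsurj hmul hpure
end

section
/- Let V and W be Euclidean Jordan algebras arising as systems in a monoidal operational PET with composite V ⊗ W. If {pᵢ} is a basis of atomic effects of V and {qⱼ} a basis of atomic effects of W, then the set {pᵢ ⊗ qⱼ} is linearly independent in V ⊗ W; hence dim(V ⊗ W) ≥ dim(V)·dim(W). -/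
/-! Apply a partial evaluation `id ⊗ ω` to a vanishing combination `∑ gᵢⱼ • pᵢ ⊗ qⱼ`: independence
of the `pᵢ` forces `ω (∑ⱼ gᵢⱼ • qⱼ) = 0` for every state `ω`, so `∑ⱼ gᵢⱼ • qⱼ = 0` because states
separate effects, and independence of the `qⱼ` gives `gᵢⱼ = 0`. -/

theorem eq_zero_of_states_separate {W : Type*} [AddCommGroup W] [PartialOrder W] [Module ℝ W]
    {u : W}
    (hsep : ∀ w w' : W,
      (∀ ω : W →ₗ[ℝ] ℝ, (∀ x, 0 ≤ x → 0 ≤ ω x) → ω u = 1 → ω w ≤ ω w') → w ≤ w')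
    {w : W} (hw : ∀ ω : W →ₗ[ℝ] ℝ, (∀ x, 0 ≤ x → 0 ≤ ω x) → ω u = 1 → ω w = 0) :
    w = 0 :=
  le_antisymm (hsep _ _ fun ω hpos hunit => by rw [hw ω hpos hunit, map_zero])
    (hsep _ _ fun ω hpos hunit => by rw [hw ω hpos hunit, map_zero])

theorem linearIndependent_bilinear_of_partialEval
    {R V W T ι κ : Type*} [CommRing R] [Fintype ι] [Fintype κ]
    [AddCommGroup V] [Module R V] [AddCommGroup W] [Module R W] [AddCommGroup T] [Module R T]
    (t : V →ₗ[R] W →ₗ[R] T) (S : Set (W →ₗ[R] R))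
    (hsep : ∀ w, (∀ ω ∈ S, ω w = 0) → w = 0)
    (hpartial : ∀ ω ∈ S, ∃ Φ : T →ₗ[R] V, ∀ v w, Φ (t v w) = ω w • v)
    {v : ι → V} {w : κ → W} (hv : LinearIndependent R v) (hw : LinearIndependent R w) :
    LinearIndependent R (fun ij : ι × κ => t (v ij.1) (w ij.2)) := by
  rw [Fintype.linearIndependent_iff] at hv hw ⊢
  intro g hg
  have hrow : ∀ i, ∑ j, g (i, j) • w j = 0 := by
    intro i
    refine hsep _ fun ω hω => ?_
    obtain ⟨Φ, hΦ⟩ := hpartial ω hω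
    have hcoeff : ∑ i', (∑ j, g (i', j) * ω (w j)) • v i' = 0 := by
      simpa only [map_sum, map_smul, hΦ, Fintype.sum_prod_type, Finset.sum_smul, smul_smul,
        map_zero] using congrArg Φ hg
    simpa only [map_sum, map_smul, smul_eq_mul] using hv _ hcoeff i
  rintro ⟨i, j⟩
  exact hw _ (hrow i) j

theorem monoidal_opet_tensor_basis_linearIndependent_general
    {V W T : Type}
    [AddCommGroup V] [Module ℝ V]
    [AddCommGroup W] [PartialOrder W] [Module ℝ W]
    [AddCommGroup T] [Module ℝ T] [FiniteDimensional ℝ T]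
    (oneW : W)
    (t : V →ₗ[ℝ] W →ₗ[ℝ] T)
    (hsepW : ∀ w w' : W,
      (∀ ω : W →ₗ[ℝ] ℝ, (∀ u, 0 ≤ u → 0 ≤ ω u) → ω oneW = 1 → ω w ≤ ω w') → w ≤ w')
    (hpartialW : ∀ ω : W →ₗ[ℝ] ℝ, (∀ u, 0 ≤ u → 0 ≤ ω u) → ω oneW = 1 →
      ∃ Φ : T →ₗ[ℝ] V, ∀ v w, Φ (t v w) = ω w • v)
    {m n : ℕ} (bV : Module.Basis (Fin m) ℝ V) (bW : Module.Basis (Fin n) ℝ W) :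
    LinearIndependent ℝ (fun ij : Fin m × Fin n => t (bV ij.1) (bW ij.2)) ∧
      Module.finrank ℝ V * Module.finrank ℝ W ≤ Module.finrank ℝ T := by
  have hLI := linearIndependent_bilinear_of_partialEval t
    {ω | (∀ u, 0 ≤ u → 0 ≤ ω u) ∧ ω oneW = 1}
    (fun _ hw => eq_zero_of_states_separate hsepW fun ω hpos hunit => hw ω ⟨hpos, hunit⟩)
    (fun ω hω => hpartialW ω hω.1 hω.2) bV.linearIndependent bW.linearIndependent
  refine ⟨hLI, ?_⟩
  simpa [Module.finrank_eq_card_basis bV, Module.finrank_eq_card_basis bW]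
    using hLI.fintype_card_le_finrank

/-- Let `V` and `W` be (the effect spaces of) Euclidean Jordan
algebras arising as systems of a monoidal operational PET, with composite
`T = V ⊗ W` and bilinear tensor `t : V → W → T`. Assume (context facts): for
every unital state `ω` on one factor there is a linear partial-evaluation map
`id ⊗ ω` (resp. `ω ⊗ id`) with `(id ⊗ ω)(v ⊗ w) = ω(w) • v`, and unital
states order-separate effects in each finite-dimensional factor. If `{pᵢ}` is
a basis of atomic effects of `V` and `{qⱼ}` a basis of atomic effects of `W`,
then `{pᵢ ⊗ qⱼ}` is linearly independent in `T`; hence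
`dim(V ⊗ W) ≥ dim V · dim W`. -/
theorem monoidal_opet_tensor_basis_linearIndependent
    {V W T : Type}
    [AddCommGroup V] [PartialOrder V] [Module ℝ V] [FiniteDimensional ℝ V]
    [AddCommGroup W] [PartialOrder W] [Module ℝ W] [FiniteDimensional ℝ W]
    [AddCommGroup T] [Module ℝ T] [FiniteDimensional ℝ T]
    (oneV : V) (oneW : W)
    (t : V →ₗ[ℝ] W →ₗ[ℝ] T)
    (hsepV : ∀ v v' : V,
      (∀ ω : V →ₗ[ℝ] ℝ, (∀ u, 0 ≤ u → 0 ≤ ω u) → ω oneV = 1 → ω v ≤ ω v') → v ≤ v')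
    (hsepW : ∀ w w' : W,
      (∀ ω : W →ₗ[ℝ] ℝ, (∀ u, 0 ≤ u → 0 ≤ ω u) → ω oneW = 1 → ω w ≤ ω w') → w ≤ w')
    (hpartialW : ∀ ω : W →ₗ[ℝ] ℝ, (∀ u, 0 ≤ u → 0 ≤ ω u) → ω oneW = 1 →
      ∃ Φ : T →ₗ[ℝ] V, ∀ v w, Φ (t v w) = ω w • v)
    (hpartialV : ∀ ω : V →ₗ[ℝ] ℝ, (∀ u, 0 ≤ u → 0 ≤ ω u) → ω oneV = 1 →
      ∃ Φ : T →ₗ[ℝ] W, ∀ v w, Φ (t v w) = ω v • w)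
    {m n : ℕ} (bV : Module.Basis (Fin m) ℝ V) (bW : Module.Basis (Fin n) ℝ W)
    (hAtomV : ∀ i, 0 ≤ bV i ∧ bV i ≤ oneV ∧ bV i ≠ 0 ∧
      ∀ q, 0 ≤ q → q ≤ bV i → ∃ c : ℝ, q = c • bV i)
    (hAtomW : ∀ j, 0 ≤ bW j ∧ bW j ≤ oneW ∧ bW j ≠ 0 ∧
      ∀ q, 0 ≤ q → q ≤ bW j → ∃ c : ℝ, q = c • bW j) :
    LinearIndependent ℝ (fun ij : Fin m × Fin n => t (bV ij.1) (bW ij.2)) ∧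
      Module.finrank ℝ V * Module.finrank ℝ W ≤ Module.finrank ℝ T :=
  monoidal_opet_tensor_basis_linearIndependent_general oneW t hsepW hpartialW bV bW
end
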